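/- If the elastic Herglotz wave function v_g with kernel g ∈ 𝓛²(𝕊), defined by v_g(x) = e^{−iπ/4} ∫_𝕊 { √(k_p/ω) d e^{−i k_p x·d} g_p(d) + √(k_s/ω) d^⊥ e^{−i k_s x·d} g_s(d) } ds(d), vanishes for all x ∈ ℝ², then g = 0 (i.e. g_p = 0 and g_s = 0 in L²(𝕊)). This holds both when k_p ≠ k_s and when k_p = k_s. -/

import Mathlib

/-!
Plane waves `ξ ↦ exp (-i x·ξ)` form a multiplicative, star-closed family separating points, so by
Stone–Weierstrass they span a dense subalgebra of `C(K, ℂ)` for compact `K ⊆ ℝ²`. Hence the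
vanishing of `v_g` forces
`∫ √(k_p/ω) g_p d · W (k_p d) + √(k_s/ω) g_s d^⊥ · W (k_s d) = 0` for every continuous vector
field `W`.
Taking `W ξ = p(ξ) ξ` kills the shear part (`d^⊥ · d = 0`), and `W ξ = p(ξ) ξ^⊥` kills the
pressure part, so `∫ g_p(d) p(k_p d) = 0` and `∫ g_s(d) p(k_s d) = 0` for all continuous `p`.
Choosing `p` with `p (k d(θ)) = exp (i n θ)` shows that all Fourier coefficients of `g_p` and
`g_s` vanish, and Parseval's identity gives `g = 0`.
-/

open MeasureTheory

/-- Lebesgue (arclength) measure on the angle parametrization of the unit circle. -/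
noncomputable def circleMeasure : Measure ℝ := volume.restrict (Set.Ioc (0 : ℝ) (2 * Real.pi))

open Set

instance : IsFiniteMeasure circleMeasure := isFiniteMeasure_restrict.2 measure_Ioc_lt_top.ne

noncomputable def planeWave (x : ℝ × ℝ) : C(ℝ × ℝ, ℂ) :=
  ⟨fun ξ => Complex.exp (-Complex.I * ((x.1 * ξ.1 + x.2 * ξ.2 : ℝ) : ℂ)), by fun_prop⟩

theorem planeWave_apply (x ξ : ℝ × ℝ) :
    planeWave x ξ = Complex.exp (-Complex.I * ((x.1 * ξ.1 + x.2 * ξ.2 : ℝ) : ℂ)) := rfl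

theorem planeWave_comm (x ξ : ℝ × ℝ) : planeWave x ξ = planeWave ξ x := by
  simp only [planeWave_apply, mul_comm]

theorem planeWave_zero : planeWave 0 = 1 := by
  ext ξ; simp [planeWave_apply]

theorem planeWave_add (x y : ℝ × ℝ) : planeWave (x + y) = planeWave x * planeWave y := by
  ext ξ
  simp only [planeWave_apply, ContinuousMap.mul_apply, ← Complex.exp_add, Prod.fst_add,
    Prod.snd_add]
  push_cast; ring_nf

theorem planeWave_neg (x : ℝ × ℝ) : planeWave (-x) = star (planeWave x) := by
  ext ξ
  simp only [planeWave_apply, ContinuousMap.star_apply, RCLike.star_def, ← Complex.exp_conj,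
    map_mul, map_neg, Complex.conj_I, Complex.conj_ofReal, Prod.fst_neg, Prod.snd_neg]
  push_cast; ring_nf

theorem planeWave_apply_add (x ξ η : ℝ × ℝ) :
    planeWave x (ξ + η) = planeWave x ξ * planeWave x η := by
  simp only [planeWave_comm x, planeWave_add, ContinuousMap.mul_apply]

theorem planeWave_apply_eq_neg_one {x v : ℝ × ℝ} (h : x.1 * v.1 + x.2 * v.2 = Real.pi) :
    planeWave x v = -1 := by
  rw [planeWave_apply, h, neg_mul, Complex.exp_neg, mul_comm, Complex.exp_pi_mul_I, inv_neg,
    inv_one]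

theorem exists_planeWave_apply_ne_one {v : ℝ × ℝ} (hv : v ≠ 0) : ∃ x, planeWave x v ≠ 1 := by
  have hneg : (-1 : ℂ) ≠ 1 := by norm_num
  rcases v with ⟨v₁, v₂⟩
  by_cases h₁ : v₁ = 0
  · have h₂ : v₂ ≠ 0 := fun h₂ => hv (by simp [h₁, h₂])
    exact ⟨(0, Real.pi / v₂), by rw [planeWave_apply_eq_neg_one (by field_simp; ring)]; exact hneg⟩
  · exact ⟨(Real.pi / v₁, 0), by rw [planeWave_apply_eq_neg_one (by field_simp; ring)]; exact hneg⟩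

noncomputable def planeWaveHom (K : Set (ℝ × ℝ)) : Multiplicative (ℝ × ℝ) →* C(K, ℂ) where
  toFun x := (planeWave x.toAdd).restrict K
  map_one' := by rw [toAdd_one, planeWave_zero]; rfl
  map_mul' x y := by rw [toAdd_mul, planeWave_add]; rfl

theorem eq_zero_of_forall_planeWave_eq_zero {K : Set (ℝ × ℝ)} [CompactSpace K]
    (T : C(K, ℂ) →L[ℂ] ℂ) (hT : ∀ x, T ((planeWave x).restrict K) = 0) : T = 0 := by
  set A := StarAlgebra.adjoin ℂ (range (planeWaveHom K))
  have hstar : star (range (planeWaveHom K)) ⊆ range (planeWaveHom K) := by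
    rintro w ⟨x, hx⟩
    refine ⟨Multiplicative.ofAdd (-x.toAdd), ?_⟩
    rw [← star_star w, ← hx]
    ext
    simp [planeWaveHom, planeWave_neg]
  have hsep : A.SeparatesPoints := by
    intro ξ η hξη
    obtain ⟨x, hx⟩ := exists_planeWave_apply_ne_one (sub_ne_zero.2 (Subtype.coe_injective.ne hξη))
    refine ⟨_, ⟨planeWaveHom K (Multiplicative.ofAdd x),
      StarAlgebra.subset_adjoin ℂ _ ⟨_, rfl⟩, rfl⟩, ?_⟩
    intro heq
    apply hx
    have hη : planeWave x η ≠ 0 := Complex.exp_ne_zero _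
    change planeWave x ξ = planeWave x η at heq
    rwa [← sub_add_cancel (ξ : ℝ × ℝ) η, planeWave_apply_add, mul_eq_right₀ hη] at heq
  have hA : (A : Set C(K, ℂ)) ⊆ ((T : C(K, ℂ) →ₗ[ℂ] ℂ).ker : Set C(K, ℂ)) := by
    intro w hw
    change w ∈ Subalgebra.toSubmodule A.toSubalgebra at hw
    rw [StarAlgebra.adjoin_eq_span, union_eq_self_of_subset_right hstar,
      MonoidHom.mclosure_range] at hw
    refine Submodule.span_le.2 ?_ hw
    rintro _ ⟨x, rfl⟩
    exact hT x.toAdd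
  have hdense : closure (A : Set C(K, ℂ)) = univ := by
    rw [← StarSubalgebra.topologicalClosure_coe,
      ContinuousMap.starSubalgebra_topologicalClosure_eq_top_of_separatesPoints A hsep]
    rfl
  ext w
  exact closure_minimal hA T.isClosed_ker (hdense ▸ mem_univ w)

section IntegralAgainstContinuous

variable {X K : Type*} [MeasurableSpace X] {μ : Measure X} [TopologicalSpace K] [CompactSpace K]
  [MeasurableSpace K] [OpensMeasurableSpace K] {F : X → ℂ} {a : X → K}

theorem MeasureTheory.Integrable.mul_continuousMap_comp (hF : Integrable F μ)
    (ha : AEMeasurable a μ) (w : C(K, ℂ)) : Integrable (fun x => F x * w (a x)) μ :=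
  hF.mul_bdd (w.continuous.measurable.comp_aemeasurable ha).aestronglyMeasurable
    (ae_of_all _ fun x => w.norm_coe_le_norm (a x))

noncomputable def integralMulCompCLM (hF : Integrable F μ) (ha : AEMeasurable a μ) :
    C(K, ℂ) →L[ℂ] ℂ :=
  LinearMap.mkContinuous
    { toFun := fun w => ∫ x, F x * w (a x) ∂μ
      map_add' := fun v w => by
        simp only [ContinuousMap.add_apply, mul_add]
        exact integral_add (hF.mul_continuousMap_comp ha v) (hF.mul_continuousMap_comp ha w)
      map_smul' := fun c w => by
        simp only [ContinuousMap.smul_apply, smul_eq_mul, mul_left_comm _ c, integral_const_mul,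
          RingHom.id_apply] }
    (∫ x, ‖F x‖ ∂μ) fun w => by
      calc ‖∫ x, F x * w (a x) ∂μ‖ ≤ ∫ x, ‖F x‖ * ‖w‖ ∂μ :=
            norm_integral_le_of_norm_le (hF.norm.mul_const _) (ae_of_all _ fun x => by
              rw [norm_mul]; gcongr; exact w.norm_coe_le_norm _)
        _ = (∫ x, ‖F x‖ ∂μ) * ‖w‖ := integral_mul_const _ _

end IntegralAgainstContinuous

theorem integral_mul_comp_add_eq_zero_of_planeWave {X : Type*} [MeasurableSpace X]
    {μ : Measure X} {K : Set (ℝ × ℝ)} [CompactSpace K] {F G : X → ℂ} (hF : Integrable F μ)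
    (hG : Integrable G μ) {a b : X → K} (ha : AEMeasurable a μ) (hb : AEMeasurable b μ)
    (h : ∀ x, ∫ θ, F θ * planeWave x (a θ) + G θ * planeWave x (b θ) ∂μ = 0) (w : C(K, ℂ)) :
    ∫ θ, F θ * w (a θ) + G θ * w (b θ) ∂μ = 0 := by
  have hsum : ∀ w : C(K, ℂ), (integralMulCompCLM hF ha + integralMulCompCLM hG hb) w
      = ∫ θ, F θ * w (a θ) + G θ * w (b θ) ∂μ := fun w =>
    (integral_add (hF.mul_continuousMap_comp ha w) (hG.mul_continuousMap_comp hb w)).symm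
  have hT : integralMulCompCLM hF ha + integralMulCompCLM hG hb = 0 :=
    eq_zero_of_forall_planeWave_eq_zero _ fun x => (hsum _).trans (h x)
  rw [← hsum, hT]
  rfl

theorem planeWave_polarCoord_symm (x : ℝ × ℝ) (r θ : ℝ) :
    planeWave x (polarCoord.symm (r, θ))
      = Complex.exp (-Complex.I * ((r * (x.1 * Real.cos θ + x.2 * Real.sin θ) : ℝ) : ℂ)) := by
  rw [planeWave_apply, polarCoord_symm_apply]
  ring_nf

theorem norm_polarCoord_symm_le (r θ : ℝ) : ‖polarCoord.symm (r, θ)‖ ≤ |r| := by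
  rw [polarCoord_symm_apply, Prod.norm_def, Real.norm_eq_abs, Real.norm_eq_abs, abs_mul, abs_mul]
  exact max_le (mul_le_of_le_one_right (abs_nonneg r) (Real.abs_cos_le_one θ))
    (mul_le_of_le_one_right (abs_nonneg r) (Real.abs_sin_le_one θ))

theorem MeasureTheory.Integrable.ofReal_mul {μ : Measure ℝ} {F : ℝ → ℂ} (hF : Integrable F μ)
    {φ : ℝ → ℝ} (hφ : Continuous φ) {C : ℝ} (hφ_le : ∀ θ, |φ θ| ≤ C) :
    Integrable (fun θ => (φ θ : ℂ) * F θ) μ :=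
  hF.bdd_mul (by fun_prop) (ae_of_all _ fun θ => by simpa using hφ_le θ)

theorem integral_mul_comp_polarCoord_symm_eq_zero {μ : Measure ℝ} {kp ks : ℝ} {Fp Fs : ℝ → ℂ}
    (hFp : Integrable Fp μ) (hFs : Integrable Fs μ)
    (h : ∀ x : ℝ × ℝ,
      ∫ θ, (Real.cos θ : ℂ) * Fp θ * planeWave x (polarCoord.symm (kp, θ))
        + ((-Real.sin θ : ℝ) : ℂ) * Fs θ * planeWave x (polarCoord.symm (ks, θ)) ∂μ = 0 ∧
      ∫ θ, (Real.sin θ : ℂ) * Fp θ * planeWave x (polarCoord.symm (kp, θ))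
        + (Real.cos θ : ℂ) * Fs θ * planeWave x (polarCoord.symm (ks, θ)) ∂μ = 0)
    (p : C(ℝ × ℝ, ℂ)) :
    kp * ∫ θ, Fp θ * p (polarCoord.symm (kp, θ)) ∂μ = 0 ∧
      ks * ∫ θ, Fs θ * p (polarCoord.symm (ks, θ)) ∂μ = 0 := by
  set K := Metric.closedBall (0 : ℝ × ℝ) (|kp| + |ks|)
  have : CompactSpace K := isCompact_iff_compactSpace.1 (isCompact_closedBall _ _)
  have hK : ∀ r, |r| ≤ |kp| + |ks| → ∀ θ, polarCoord.symm (r, θ) ∈ K := fun r hr θ =>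
    mem_closedBall_zero_iff.2 ((norm_polarCoord_symm_le r θ).trans hr)
  let a : ℝ → K := fun θ => ⟨_, hK kp (le_add_of_nonneg_right (abs_nonneg _)) θ⟩
  let b : ℝ → K := fun θ => ⟨_, hK ks (le_add_of_nonneg_left (abs_nonneg _)) θ⟩
  have ha : AEMeasurable a μ := (Continuous.subtype_mk
    (by simp only [polarCoord_symm_apply]; fun_prop) _).measurable.aemeasurable
  have hb : AEMeasurable b μ := (Continuous.subtype_mk
    (by simp only [polarCoord_symm_apply]; fun_prop) _).measurable.aemeasurable
  have hcos := Real.continuous_cos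
  have hsin := Real.continuous_sin
  have hF₁ := hFp.ofReal_mul hcos Real.abs_cos_le_one
  have hG₁ : Integrable (fun θ => ((-Real.sin θ : ℝ) : ℂ) * Fs θ) μ :=
    hFs.ofReal_mul hsin.neg fun θ => (abs_neg _).trans_le (Real.abs_sin_le_one θ)
  have hF₂ := hFp.ofReal_mul hsin Real.abs_sin_le_one
  have hG₂ := hFs.ofReal_mul hcos Real.abs_cos_le_one
  have h₁ := integral_mul_comp_add_eq_zero_of_planeWave hF₁ hG₁ ha hb fun x => (h x).1
  have h₂ := integral_mul_comp_add_eq_zero_of_planeWave hF₂ hG₂ ha hb fun x => (h x).2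
  have hsum : ∀ w₁ w₂ : C(K, ℂ),
      ∫ θ, ((Real.cos θ : ℂ) * Fp θ * w₁ (a θ) + ((-Real.sin θ : ℝ) : ℂ) * Fs θ * w₁ (b θ))
        + ((Real.sin θ : ℂ) * Fp θ * w₂ (a θ) + (Real.cos θ : ℂ) * Fs θ * w₂ (b θ)) ∂μ = 0 :=
    fun w₁ w₂ => (integral_add
      ((hF₁.mul_continuousMap_comp ha w₁).add (hG₁.mul_continuousMap_comp hb w₁))
      ((hF₂.mul_continuousMap_comp ha w₂).add (hG₂.mul_continuousMap_comp hb w₂))).trans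
      (by simp only [Pi.add_apply, h₁, h₂, add_zero])
  -- Testing against `(ξ₁ p, ξ₂ p)` cancels the `Fs` terms, against `(-ξ₂ p, ξ₁ p)` the `Fp` terms.
  let ξ₁ : C(ℝ × ℝ, ℂ) := ⟨fun ξ => ξ.1, by fun_prop⟩
  let ξ₂ : C(ℝ × ℝ, ℂ) := ⟨fun ξ => ξ.2, by fun_prop⟩
  constructor
  · rw [← integral_const_mul, ← hsum ((ξ₁ * p).restrict K) ((ξ₂ * p).restrict K)]
    refine integral_congr_ae (ae_of_all _ fun θ => ?_)
    simp only [polarCoord_symm_apply, Complex.ofReal_cos, ContinuousMap.restrict_apply,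
      ContinuousMap.mul_apply, ContinuousMap.coe_mk, Complex.ofReal_mul, Complex.ofReal_neg,
      Complex.ofReal_sin, neg_mul, ξ₁, a, b, ξ₂]
    linear_combination (-kp * Fp θ * p (kp * Real.cos θ, kp * Real.sin θ)) *
      Complex.sin_sq_add_cos_sq θ
  · rw [← integral_const_mul, ← hsum ((-ξ₂ * p).restrict K) ((ξ₁ * p).restrict K)]
    refine integral_congr_ae (ae_of_all _ fun θ => ?_)
    simp only [polarCoord_symm_apply, Complex.ofReal_cos, ContinuousMap.restrict_apply,
      ContinuousMap.mul_apply, ContinuousMap.neg_apply, ContinuousMap.coe_mk, Complex.ofReal_mul,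
      Complex.ofReal_sin, neg_mul, mul_neg, Complex.ofReal_neg, neg_neg, ξ₂, a, b, ξ₁]
    linear_combination (-ks * Fs θ * p (ks * Real.cos θ, ks * Real.sin θ)) *
      Complex.sin_sq_add_cos_sq θ

theorem ae_eq_zero_of_fourierCoeffOn_eq_zero {a b : ℝ} (hab : a < b) {f : ℝ → ℂ}
    (hf : MemLp f 2 (volume.restrict (Ioc a b))) (h : ∀ n, fourierCoeffOn hab f n = 0) :
    f =ᵐ[volume.restrict (Ioc a b)] 0 := by
  have parseval := hasSum_sq_fourierCoeffOn hab hf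
  simp only [h, norm_zero, ne_eq, OfNat.ofNat_ne_zero, not_false_eq_true, zero_pow] at parseval
  have hnorm : ∫ x in Ioc a b, ‖f x‖ ^ 2 = 0 := by
    rw [← intervalIntegral.integral_of_le hab.le]
    simpa [(sub_pos.2 hab).ne'] using parseval.unique hasSum_zero
  have := (integral_eq_zero_iff_of_nonneg (fun x => by positivity)
    (hf.integrable_norm_pow two_ne_zero)).1 hnorm
  filter_upwards [this] with x hx
  simpa using hx

theorem exists_continuousMap_polarCoord_symm_eq_exp {r : ℝ} (hr : r ≠ 0) (n : ℤ) :
    ∃ p : C(ℝ × ℝ, ℂ), ∀ θ, p (polarCoord.symm (r, θ)) = Complex.exp (n * θ * Complex.I) := by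
  have hr' : (r : ℂ) ≠ 0 := Complex.ofReal_ne_zero.2 hr
  obtain ⟨m, rfl | rfl⟩ := Int.eq_nat_or_neg n
  · refine ⟨⟨fun ξ => ((ξ.1 + ξ.2 * Complex.I) / r) ^ m, by fun_prop⟩, fun θ => ?_⟩
    have : ((r * Real.cos θ : ℝ) + (r * Real.sin θ : ℝ) * Complex.I) / r
        = Complex.exp (θ * Complex.I) := by
      rw [Complex.exp_mul_I]; field_simp; push_cast; ring
    simp only [ContinuousMap.coe_mk, polarCoord_symm_apply, this, ← Complex.exp_nat_mul]
    push_cast; ring_nf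
  · refine ⟨⟨fun ξ => ((ξ.1 - ξ.2 * Complex.I) / r) ^ m, by fun_prop⟩, fun θ => ?_⟩
    have : ((r * Real.cos θ : ℝ) - (r * Real.sin θ : ℝ) * Complex.I) / r
        = Complex.exp (-θ * Complex.I) := by
      rw [Complex.exp_mul_I, Complex.cos_neg, Complex.sin_neg]; field_simp; push_cast; ring
    simp only [ContinuousMap.coe_mk, polarCoord_symm_apply, this, ← Complex.exp_nat_mul]
    push_cast; ring_nf

theorem ae_eq_zero_of_integral_mul_comp_polarCoord_symm_eq_zero {r : ℝ} (hr : r ≠ 0)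
    {f : ℝ → ℂ} (hf : MemLp f 2 circleMeasure)
    (h : ∀ p : C(ℝ × ℝ, ℂ), ∫ θ, f θ * p (polarCoord.symm (r, θ)) ∂circleMeasure = 0) :
    f =ᵐ[circleMeasure] 0 := by
  refine ae_eq_zero_of_fourierCoeffOn_eq_zero Real.two_pi_pos hf fun n => ?_
  obtain ⟨p, hp⟩ := exists_continuousMap_polarCoord_symm_eq_exp hr (-n)
  have : ∫ θ in Ioc 0 (2 * Real.pi), fourier (-n) (θ : AddCircle (2 * Real.pi - 0)) • f θ
      = ∫ θ, f θ * p (polarCoord.symm (r, θ)) ∂circleMeasure := by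
    refine integral_congr_ae (ae_of_all _ fun θ => ?_)
    dsimp only
    rw [hp, fourier_coe_apply, smul_eq_mul, mul_comm]
    congr 2
    field_simp
    push_cast
    ring
  rw [fourierCoeffOn_eq_integral, intervalIntegral.integral_of_le Real.two_pi_pos.le, this, h p,
    smul_zero]

theorem herglotz_wave_function_kernel_injective
    -- Lamé constants and frequency
    (lam mu om kp ks : ℝ)
    (hmu : 0 < mu) (hlm : 0 < lam + mu) (hom : 0 < om)
    -- compressional and shear wavenumbers
    (hkp : kp = om / Real.sqrt (lam + 2 * mu))
    (hks : ks = om / Real.sqrt mu)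
    -- the Herglotz kernel g = (g_p, g_s) ∈ 𝓛²(𝕊)
    (gp gs : ℝ → ℂ)
    (hgp : MemLp gp 2 circleMeasure)
    (hgs : MemLp gs 2 circleMeasure)
    -- hypothesis: v_g(x) = 0 for all x ∈ ℝ² (first and second components)
    (hvanish : ∀ x : ℝ × ℝ,
      (Complex.exp (-(Real.pi / 4 : ℝ) * Complex.I) *
        ∫ θ in Set.Ioc (0 : ℝ) (2 * Real.pi),
          ((Real.sqrt (kp / om) : ℂ) * (Real.cos θ : ℂ) *
              Complex.exp (-Complex.I * ((kp * (x.1 * Real.cos θ + x.2 * Real.sin θ) : ℝ) : ℂ)) *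
              gp θ
            + (Real.sqrt (ks / om) : ℂ) * ((-Real.sin θ : ℝ) : ℂ) *
              Complex.exp (-Complex.I * ((ks * (x.1 * Real.cos θ + x.2 * Real.sin θ) : ℝ) : ℂ)) *
              gs θ) = 0)
      ∧
      (Complex.exp (-(Real.pi / 4 : ℝ) * Complex.I) *
        ∫ θ in Set.Ioc (0 : ℝ) (2 * Real.pi),
          ((Real.sqrt (kp / om) : ℂ) * (Real.sin θ : ℂ) *
              Complex.exp (-Complex.I * ((kp * (x.1 * Real.cos θ + x.2 * Real.sin θ) : ℝ) : ℂ)) *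
              gp θ
            + (Real.sqrt (ks / om) : ℂ) * (Real.cos θ : ℂ) *
              Complex.exp (-Complex.I * ((ks * (x.1 * Real.cos θ + x.2 * Real.sin θ) : ℝ) : ℂ)) *
              gs θ) = 0)) :
    -- conclusion: g = 0, i.e. g_p = 0 and g_s = 0 as elements of L²(𝕊)
    gp =ᵐ[circleMeasure] 0 ∧ gs =ᵐ[circleMeasure] 0 := by
  have hkp0 : 0 < kp := hkp ▸ div_pos hom (Real.sqrt_pos.2 (by linarith))
  have hks0 : 0 < ks := hks ▸ div_pos hom (Real.sqrt_pos.2 hmu)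
  have hcp : (Real.sqrt (kp / om) : ℂ) ≠ 0 :=
    Complex.ofReal_ne_zero.2 (Real.sqrt_pos.2 (div_pos hkp0 hom)).ne'
  have hcs : (Real.sqrt (ks / om) : ℂ) ≠ 0 :=
    Complex.ofReal_ne_zero.2 (Real.sqrt_pos.2 (div_pos hks0 hom)).ne'
  have key := integral_mul_comp_polarCoord_symm_eq_zero (μ := circleMeasure) (kp := kp)
    (ks := ks)
    ((hgp.integrable one_le_two).const_mul (Real.sqrt (kp / om) : ℂ))
    ((hgs.integrable one_le_two).const_mul (Real.sqrt (ks / om) : ℂ)) fun x => ?_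
  · refine ⟨ae_eq_zero_of_integral_mul_comp_polarCoord_symm_eq_zero hkp0.ne' hgp fun p => ?_,
      ae_eq_zero_of_integral_mul_comp_polarCoord_symm_eq_zero hks0.ne' hgs fun p => ?_⟩
    · simpa [mul_assoc, integral_const_mul, hkp0.ne', hcp] using (key p).1
    · simpa [mul_assoc, integral_const_mul, hks0.ne', hcs] using (key p).2
  · constructor
    · refine (integral_congr_ae (ae_of_all _ fun θ => ?_)).trans
        ((mul_eq_zero.1 (hvanish x).1).resolve_left (Complex.exp_ne_zero _))
      simp only [planeWave_polarCoord_symm]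
      ring
    · refine (integral_congr_ae (ae_of_all _ fun θ => ?_)).trans
        ((mul_eq_zero.1 (hvanish x).2).resolve_left (Complex.exp_ne_zero _))
      simp only [planeWave_polarCoord_symm]
      ring
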